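/- Let P, Q be affine points of E(ℚ) with |x(P)| ≤ 2·X^{1/6} and |x(Q)| ≤ 2·X^{1/6}, and suppose x(P) = x₁/s and x(Q) = x₂/s where x₁, x₂ are integers with x₁ ≠ x₂ and s is a positive integer. Then P + Q is an affine point and h(P+Q) ≤ 3·log s + (1/2)·log X + 3.9. -/

import Mathlib

open scoped TensorProduct

noncomputable section

/-- The logarithmic Weil height of a rational number:
`h(p/q) = log max (|p|, q)` for `p/q` in lowest terms. -/
def qh (q : ℚ) : ℝ := Real.log (max (|q.num| : ℝ) (q.den : ℝ))

/-- The short Weierstrass curve `y² = x³ + Ax + B` over `ℚ`. -/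
def Ecurve (A B : ℤ) : WeierstrassCurve.Affine ℚ :=
  { a₁ := 0, a₂ := 0, a₃ := 0, a₄ := (A : ℚ), a₆ := (B : ℚ) }

/-- `X = max (|A|³, |B|²)` as a real number. -/
def Xval (A B : ℤ) : ℝ := max (|(A : ℝ)| ^ 3) (|(B : ℝ)| ^ 2)

/-- The x-coordinate of an affine point (with junk value `0` at the point at infinity). -/
def xCoord {W : WeierstrassCurve.Affine ℚ} : W.Point → ℚ
  | .zero => 0
  | @WeierstrassCurve.Affine.Point.some _ _ _ x _ _ => x

/-- `hh : W.Point → ℝ` is a canonical height for `W`: it vanishes on points of finite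
order, and for every point `P` of infinite order, `h(x(2ⁿ P)) / 4ⁿ → hh P`. -/
def IsCanonicalHeight (W : WeierstrassCurve.Affine ℚ) (hh : W.Point → ℝ) : Prop :=
  (∀ P : W.Point, IsOfFinAddOrder P → hh P = 0) ∧
  (∀ P : W.Point, ¬ IsOfFinAddOrder P →
    Filter.Tendsto (fun n : ℕ => qh (xCoord ((2 ^ n : ℕ) • P)) / 4 ^ n)
      Filter.atTop (nhds (hh P)))

/-- `cos θ_{P,Q} = (ĥ(P+Q) − ĥ(P) − ĥ(Q)) / (2 √(ĥ(P) ĥ(Q)))`. -/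
def cosAngle {W : WeierstrassCurve.Affine ℚ} (hh : W.Point → ℝ) (P Q : W.Point) : ℝ :=
  (hh (P + Q) - hh P - hh Q) / (2 * Real.sqrt (hh P * hh Q))

/-- The rank `dim_ℚ (ℚ ⊗_ℤ G)` of an abelian group `G`. -/
def rankQ (G : Type*) [AddCommGroup G] : ℕ :=
  Module.finrank ℚ (ℚ ⊗[ℤ] G)

end

/-! Write `x(P) = x₁/s`, `x(Q) = x₂/s` and `m(x) = x³ + A s² x + B s³`, so that `s³ y(P)² = m(x₁)`
and `s³ y(Q)² = m(x₂)`. Then `w = s³ y(P) y(Q)` is an integer, because `w² = m(x₁) m(x₂)`, and the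
chord formula gives `x(P + Q) = N / D` with `D = s (x₁ - x₂)²` and
`N = (x₁ x₂ + A s²)(x₁ + x₂) + 2 B s³ - 2 w`. With `t = X^{1/6}` we have `|A| ≤ t²`, `|B| ≤ t³`
and `|xᵢ| ≤ 2 s t`, hence `|m(xᵢ)|, |w| ≤ 11 (s t)³` and `|N|, D ≤ 44 (s t)³`. So
`h(P + Q) ≤ log 44 + 3 log s + (1/2) log X`, and `log 44 < 3.9`. -/

open WeierstrassCurve.Affine

lemma Rat.exists_eq_intCast_of_sq_eq_intCast {r : ℚ} {m : ℤ} (h : r ^ 2 = m) :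
    ∃ k : ℤ, r = k := by
  have hden : r.den ^ 2 = 1 := by rw [← Rat.den_pow, h, Rat.den_intCast]
  exact ⟨r.num, ((Rat.den_eq_one_iff r).mp (by simpa using hden)).symm⟩

lemma qh_intCast_div_le_log {N D : ℤ} (hD : 0 < D) {C : ℝ} (hN : |(N : ℝ)| ≤ C)
    (hDC : (D : ℝ) ≤ C) : qh (N / D) ≤ Real.log C := by
  rw [← Rat.divInt_eq_div]
  have hnum : |((Rat.divInt N D).num : ℝ)| ≤ |(N : ℝ)| := by
    rcases eq_or_ne N 0 with rfl | hN0
    · simp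
    · have := Int.natAbs_le_of_dvd_ne_zero (Rat.num_dvd N hD.ne') hN0
      simp only [← Int.cast_abs, Int.abs_eq_natAbs, Int.cast_natCast]
      exact_mod_cast this
  have hden : ((Rat.divInt N D).den : ℝ) ≤ D := by
    exact_mod_cast Int.le_of_dvd hD (Rat.den_dvd N D)
  exact Real.log_le_log (lt_max_of_lt_right (by positivity))
    (max_le (hnum.trans hN) (hden.trans hDC))

section ChordAlgebra

variable {K : Type*} [Field K] {a b s : K}

lemma cube_mul_sq_eq_of_sq_eq {x y : K} (hs : s ≠ 0)
    (h : y ^ 2 = (x / s) ^ 3 + a * (x / s) + b) :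
    s ^ 3 * y ^ 2 = x ^ 3 + a * s ^ 2 * x + b * s ^ 3 := by
  rw [h]; field_simp

lemma chord_sq_sub_sub_eq_div {x₁ x₂ y₁ y₂ : K} (hs : s ≠ 0) (hx : x₁ ≠ x₂)
    (h₁ : y₁ ^ 2 = (x₁ / s) ^ 3 + a * (x₁ / s) + b)
    (h₂ : y₂ ^ 2 = (x₂ / s) ^ 3 + a * (x₂ / s) + b) :
    ((y₁ - y₂) / (x₁ / s - x₂ / s)) ^ 2 - x₁ / s - x₂ / s =
      ((x₁ * x₂ + a * s ^ 2) * (x₁ + x₂) + 2 * b * s ^ 3 - 2 * (s ^ 3 * y₁ * y₂)) /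
        (s * (x₁ - x₂) ^ 2) := by
  have hx' : x₁ - x₂ ≠ 0 := sub_ne_zero.mpr hx
  rw [eq_div_iff (by positivity)]
  field_simp
  linear_combination cube_mul_sq_eq_of_sq_eq hs h₁ + cube_mul_sq_eq_of_sq_eq hs h₂

end ChordAlgebra

namespace Ecurve

variable {A B : ℤ}

lemma sq_eq_of_nonsingular {x y : ℚ} (h : (Ecurve A B).Nonsingular x y) :
    y ^ 2 = x ^ 3 + A * x + B := by
  simpa [Ecurve] using (equation_iff x y).mp h.1

lemma xCoord_some_add_some {x₁ x₂ y₁ y₂ : ℚ} (h₁ : (Ecurve A B).Nonsingular x₁ y₁)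
    (h₂ : (Ecurve A B).Nonsingular x₂ y₂) (hx : x₁ ≠ x₂) :
    xCoord (Point.some x₁ y₁ h₁ + Point.some x₂ y₂ h₂) =
      ((y₁ - y₂) / (x₁ - x₂)) ^ 2 - x₁ - x₂ := by
  rw [Point.add_of_X_ne hx]
  simp only [xCoord, addX, slope_of_X_ne hx, Ecurve]
  ring

lemma exists_xCoord_add_eq_div {x₁ x₂ s : ℤ} {y₁ y₂ : ℚ} (hs : (s : ℚ) ≠ 0) (hx : x₁ ≠ x₂)
    (h₁ : (Ecurve A B).Nonsingular (x₁ / s) y₁) (h₂ : (Ecurve A B).Nonsingular (x₂ / s) y₂) :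
    ∃ w : ℤ,
      w ^ 2 = (x₁ ^ 3 + A * s ^ 2 * x₁ + B * s ^ 3) * (x₂ ^ 3 + A * s ^ 2 * x₂ + B * s ^ 3) ∧
      xCoord (Point.some _ _ h₁ + Point.some _ _ h₂) =
        (((x₁ * x₂ + A * s ^ 2) * (x₁ + x₂) + 2 * B * s ^ 3 - 2 * w : ℤ) : ℚ) /
          ((s * (x₁ - x₂) ^ 2 : ℤ) : ℚ) := by
  have hxq : (x₁ : ℚ) ≠ x₂ := Int.cast_injective.ne hx
  have e₁ := cube_mul_sq_eq_of_sq_eq hs (sq_eq_of_nonsingular h₁)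
  have e₂ := cube_mul_sq_eq_of_sq_eq hs (sq_eq_of_nonsingular h₂)
  have hsq : ((s : ℚ) ^ 3 * y₁ * y₂) ^ 2 = (((x₁ ^ 3 + A * s ^ 2 * x₁ + B * s ^ 3) *
      (x₂ ^ 3 + A * s ^ 2 * x₂ + B * s ^ 3) : ℤ) : ℚ) := by
    push_cast; rw [← e₁, ← e₂]; ring
  obtain ⟨w, hw⟩ := Rat.exists_eq_intCast_of_sq_eq_intCast hsq
  refine ⟨w, ?_, ?_⟩
  · rw [hw] at hsq; exact_mod_cast hsq
  · rw [xCoord_some_add_some h₁ h₂ (by simpa [div_left_inj' hs] using hxq),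
      chord_sq_sub_sub_eq_div hs hxq (sq_eq_of_nonsingular h₁) (sq_eq_of_nonsingular h₂), hw]
    push_cast
    ring

end Ecurve

section Bounds

variable {a b s t : ℝ}

lemma abs_le_of_sq_eq_mul {w m₁ m₂ C : ℝ} (h : w ^ 2 = m₁ * m₂) (h₁ : |m₁| ≤ C)
    (h₂ : |m₂| ≤ C) : |w| ≤ C :=
  abs_le_of_sq_le_sq (calc
    w ^ 2 = m₁ * m₂ := h
    _ ≤ |m₁| * |m₂| := abs_mul m₁ m₂ ▸ le_abs_self _
    _ ≤ C ^ 2 := sq C ▸ mul_le_mul h₁ h₂ (abs_nonneg _) ((abs_nonneg _).trans h₁))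
    ((abs_nonneg _).trans h₁)

lemma abs_cubic_le (ha : |a| ≤ t ^ 2) (hb : |b| ≤ t ^ 3) (hs : 0 ≤ s) {x : ℝ}
    (hx : |x| ≤ 2 * s * t) : |x ^ 3 + a * s ^ 2 * x + b * s ^ 3| ≤ 11 * (s * t) ^ 3 := by
  calc |x ^ 3 + a * s ^ 2 * x + b * s ^ 3|
      ≤ |x| ^ 3 + |a| * |x| * s ^ 2 + |b| * s ^ 3 := by
        refine (abs_add_three _ _ _).trans_eq ?_
        simp only [abs_mul, abs_pow, abs_of_nonneg hs]; ring
    _ ≤ (2 * s * t) ^ 3 + t ^ 2 * (2 * s * t) * s ^ 2 + t ^ 3 * s ^ 3 := by gcongr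
    _ = 11 * (s * t) ^ 3 := by ring

lemma abs_chord_num_le (ha : |a| ≤ t ^ 2) (hb : |b| ≤ t ^ 3) (hs : 0 ≤ s) (ht : 0 ≤ t)
    {x₁ x₂ w : ℝ} (hx₁ : |x₁| ≤ 2 * s * t) (hx₂ : |x₂| ≤ 2 * s * t)
    (hw : |w| ≤ 11 * (s * t) ^ 3) :
    |(x₁ * x₂ + a * s ^ 2) * (x₁ + x₂) + 2 * b * s ^ 3 - 2 * w| ≤ 44 * (s * t) ^ 3 := by
  have hprod : |x₁ * x₂ + a * s ^ 2| ≤ 5 * (s * t) ^ 2 :=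
    calc |x₁ * x₂ + a * s ^ 2| ≤ |x₁| * |x₂| + |a| * s ^ 2 :=
          (abs_add_le _ _).trans_eq (by rw [abs_mul, abs_mul, abs_of_nonneg (sq_nonneg s)])
      _ ≤ (2 * s * t) * (2 * s * t) + t ^ 2 * s ^ 2 := by gcongr
      _ = 5 * (s * t) ^ 2 := by ring
  have hsum : |x₁ + x₂| ≤ 4 * s * t := (abs_add_le _ _).trans (by linarith)
  calc |(x₁ * x₂ + a * s ^ 2) * (x₁ + x₂) + 2 * b * s ^ 3 - 2 * w|
      ≤ |x₁ * x₂ + a * s ^ 2| * |x₁ + x₂| + 2 * |b| * s ^ 3 + 2 * |w| := by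
        refine (abs_sub _ _).trans ?_
        grw [abs_add_le]
        simp only [abs_mul, abs_pow, abs_of_nonneg hs, abs_two, le_refl]
    _ ≤ 5 * (s * t) ^ 2 * (4 * s * t) + 2 * t ^ 3 * s ^ 3 + 2 * (11 * (s * t) ^ 3) := by
        gcongr
    _ = 44 * (s * t) ^ 3 := by ring

lemma chord_den_le (hs : 0 ≤ s) (ht : 1 ≤ t) {x₁ x₂ : ℝ} (hx₁ : |x₁| ≤ 2 * s * t)
    (hx₂ : |x₂| ≤ 2 * s * t) : s * (x₁ - x₂) ^ 2 ≤ 44 * (s * t) ^ 3 := by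
  have h : |x₁ - x₂| ≤ 4 * s * t := (abs_sub _ _).trans (by linarith)
  calc s * (x₁ - x₂) ^ 2 = s * |x₁ - x₂| ^ 2 := by rw [sq_abs]
    _ ≤ s * (4 * s * t) ^ 2 := by gcongr
    _ = 16 * (s ^ 3 * t ^ 2) * 1 := by ring
    _ ≤ 44 * (s ^ 3 * t ^ 2) * t := by gcongr; norm_num
    _ = 44 * (s * t) ^ 3 := by ring

end Bounds

lemma Real.log_44_lt : Real.log 44 < 3.9 := by
  rw [Real.log_lt_iff_lt_exp (by norm_num)]
  calc (44 : ℝ) < (0.039 + 1) ^ 100 := by norm_num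
    _ ≤ Real.exp 0.039 ^ 100 := by gcongr; exact Real.add_one_le_exp _
    _ = Real.exp 3.9 := by rw [← Real.exp_nat_mul]; norm_num

lemma log_forty_four_mul_cube_le {s X : ℝ} (hs : 0 < s) (hX : 0 < X) :
    Real.log (44 * (s * X ^ (1 / 6 : ℝ)) ^ 3) ≤ 3 * Real.log s + 1 / 2 * Real.log X + 3.9 := by
  rw [Real.log_mul (by norm_num) (by positivity), Real.log_pow,
    Real.log_mul hs.ne' (by positivity), Real.log_rpow hX]
  linarith [Real.log_44_lt]

section Xval

variable {A B : ℤ}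

lemma one_le_Xval (hAB : 4 * A ^ 3 + 27 * B ^ 2 ≠ 0) : 1 ≤ Xval A B := by
  rcases eq_or_ne A 0 with rfl | hA
  · have hB : B ≠ 0 := by rintro rfl; simp at hAB
    exact le_max_of_le_right (one_le_pow₀ (by exact_mod_cast Int.one_le_abs hB))
  · exact le_max_of_le_left (one_le_pow₀ (by exact_mod_cast Int.one_le_abs hA))

lemma Xval_nonneg : 0 ≤ Xval A B := le_max_of_le_left (by positivity)

lemma Xval_rpow_pow_six : (Xval A B ^ (1 / 6 : ℝ)) ^ 6 = Xval A B := by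
  rw [← Real.rpow_natCast, ← Real.rpow_mul Xval_nonneg]
  norm_num

lemma abs_A_le_Xval_rpow : |(A : ℝ)| ≤ (Xval A B ^ (1 / 6 : ℝ)) ^ 2 := by
  refine le_of_pow_le_pow_left₀ three_ne_zero (pow_nonneg (Real.rpow_nonneg Xval_nonneg _) _) ?_
  rw [← pow_mul, Xval_rpow_pow_six]
  exact le_max_left _ _

lemma abs_B_le_Xval_rpow : |(B : ℝ)| ≤ (Xval A B ^ (1 / 6 : ℝ)) ^ 3 := by
  refine le_of_pow_le_pow_left₀ two_ne_zero (pow_nonneg (Real.rpow_nonneg Xval_nonneg _) _) ?_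
  rw [← pow_mul, Xval_rpow_pow_six]
  exact le_max_right _ _

end Xval

theorem statement8 (A B : ℤ) (hAB : 4 * A ^ 3 + 27 * B ^ 2 ≠ 0)
    (P Q : (Ecurve A B).Point) (hP : P ≠ 0) (hQ : Q ≠ 0)
    (hXP : |((xCoord P : ℚ) : ℝ)| ≤ 2 * Xval A B ^ ((1 : ℝ) / 6))
    (hXQ : |((xCoord Q : ℚ) : ℝ)| ≤ 2 * Xval A B ^ ((1 : ℝ) / 6))
    (x₁ x₂ s : ℤ) (hs : 0 < s) (hne : x₁ ≠ x₂)
    (hx₁ : xCoord P = (x₁ : ℚ) / (s : ℚ)) (hx₂ : xCoord Q = (x₂ : ℚ) / (s : ℚ)) :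
    P + Q ≠ 0 ∧
    qh (xCoord (P + Q)) ≤ 3 * Real.log s + (1 / 2) * Real.log (Xval A B) + 3.9 := by
  obtain _ | ⟨_, _, hPn⟩ := P
  · exact absurd rfl hP
  obtain _ | ⟨_, _, hQn⟩ := Q
  · exact absurd rfl hQ
  simp only [xCoord] at hx₁ hx₂ hXP hXQ
  subst hx₁ hx₂
  have hsQ : (s : ℚ) ≠ 0 := by positivity
  have hsR : (0 : ℝ) < s := by exact_mod_cast hs
  have hx : (x₁ / s : ℚ) ≠ x₂ / s := by simpa [div_left_inj' hsQ] using hne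
  refine ⟨(Point.add_of_X_ne hx).trans_ne (Point.some_ne_zero _), ?_⟩
  obtain ⟨w, hw, hxadd⟩ := Ecurve.exists_xCoord_add_eq_div hsQ hne hPn hQn
  set t := Xval A B ^ (1 / 6 : ℝ)
  have hA := abs_A_le_Xval_rpow (A := A) (B := B)
  have hB := abs_B_le_Xval_rpow (A := A) (B := B)
  have hbound {x : ℤ} (hx : |((x / s : ℚ) : ℝ)| ≤ 2 * t) : |(x : ℝ)| ≤ 2 * s * t := by
    push_cast at hx
    rwa [abs_div, abs_of_pos hsR, div_le_iff₀ hsR, mul_right_comm] at hx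
  have hx₁ := hbound hXP
  have hx₂ := hbound hXQ
  have hw' : |(w : ℝ)| ≤ 11 * (s * t) ^ 3 := abs_le_of_sq_eq_mul (by exact_mod_cast hw)
    (abs_cubic_le hA hB hsR.le hx₁) (abs_cubic_le hA hB hsR.le hx₂)
  have hX := one_le_Xval hAB
  calc qh _ ≤ Real.log (44 * (s * t) ^ 3) := by
        rw [hxadd]
        refine qh_intCast_div_le_log (by positivity) ?_ ?_
        · push_cast
          exact abs_chord_num_le hA hB hsR.le (by positivity) hx₁ hx₂ hw'
        · push_cast
          exact chord_den_le hsR.le (Real.one_le_rpow hX (by norm_num)) hx₁ hx₂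
    _ ≤ _ := log_forty_four_mul_cube_le hsR (by linarith)
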